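/- Let G be a finite simple graph with no quadrangle (no cycle of length 4), minimum degree δ and maximum degree Δ. If δ ≥ 2√Δ + 2, then G is completely hyperenergetic: E_G(v) ≥ 2 for every vertex v of G. -/

import Mathlib

open Matrix Finset

/-- The energy of the vertex `i` of a finite simple graph `G`:
the `(i,i)` entry of `|A| = (A Aᴴ)^{1/2}`, where `A` is the adjacency matrix. -/
noncomputable def vertexEnergy {n : ℕ} (G : SimpleGraph (Fin n)) [DecidableRel G.Adj]
    (i : Fin n) : ℝ :=
  (let hA := Matrix.posSemidef_self_mul_conjTranspose (G.adjMatrix ℝ)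
   (hA.1.eigenvectorUnitary.1 * diagonal ((RCLike.ofReal : ℝ → ℝ) ∘ (√·) ∘ hA.1.eigenvalues) *
    (star hA.1.eigenvectorUnitary : Matrix (Fin n) (Fin n) ℝ))) i i

/-!
Write `P = A Aᴴ = A²` as `∑ₖ λₖ uₖ uₖᵀ` and put `wₖ = (uₖ)_v²`, `μₖ = √λₖ`. Then
`E(v) = ∑ wμ`, `deg v = (A²)_vv = ∑ wμ²` and `(A⁴)_vv = ∑ wμ⁴`, and the log-convexity of the
moments `k ↦ ∑ wμᵏ` (Cauchy–Schwarz) gives `deg(v)³ ≤ E(v)² (A⁴)_vv`. Without quadrangles two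
distinct vertices have at most one common neighbour, so `(A⁴)_vv = ∑_w (A²)_vw² ≤ deg² + deg·Δ - deg`,
and `deg v ≥ δ ≥ 2√Δ + 2` makes this at most `deg³ / 4`; hence `E(v)² ≥ 4`.
-/

theorem Finset.sum_mul_sq_pow_three_le {ι : Type*} (s : Finset ι) {w μ : ι → ℝ}
    (hw : ∀ i ∈ s, 0 ≤ w i) (hμ : ∀ i ∈ s, 0 ≤ μ i) :
    (∑ i ∈ s, w i * μ i ^ 2) ^ 3 ≤ (∑ i ∈ s, w i * μ i) ^ 2 * ∑ i ∈ s, w i * μ i ^ 4 := by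
  have hwμ (k : ℕ) : ∀ i ∈ s, 0 ≤ w i * μ i ^ k := fun i hi =>
    mul_nonneg (hw i hi) (pow_nonneg (hμ i hi) k)
  set m : ℕ → ℝ := fun k => ∑ i ∈ s, w i * μ i ^ k
  have hlogconvex (k : ℕ) : m (k + 1) ^ 2 ≤ m k * m (k + 2) :=
    sum_sq_le_sum_mul_sum_of_sq_le_mul s (hwμ k) (hwμ (k + 2)) fun i _ => by ring_nf; rfl
  have hm₁ : ∑ i ∈ s, w i * μ i = m 1 := by simp only [m, pow_one]
  have hm₂ : 0 ≤ m 2 := sum_nonneg (hwμ 2)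
  have hm₄ : 0 ≤ m 4 := sum_nonneg (hwμ 4)
  rw [hm₁]
  change m 2 ^ 3 ≤ m 1 ^ 2 * m 4
  have key : m 2 * m 2 ^ 3 ≤ m 2 * (m 1 ^ 2 * m 4) := calc
    m 2 * m 2 ^ 3 = (m 2 ^ 2) ^ 2 := by ring
    _ ≤ (m 1 * m 3) ^ 2 := pow_le_pow_left₀ (sq_nonneg _) (hlogconvex 1) 2
    _ = m 1 ^ 2 * m 3 ^ 2 := by ring
    _ ≤ m 1 ^ 2 * (m 2 * m 4) := mul_le_mul_of_nonneg_left (hlogconvex 2) (sq_nonneg _)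
    _ = m 2 * (m 1 ^ 2 * m 4) := by ring
  rcases hm₂.eq_or_lt with hzero | hpos
  · rw [← hzero, zero_pow three_ne_zero]
    exact mul_nonneg (sq_nonneg _) hm₄
  · exact le_of_mul_le_mul_left key hpos

lemma Matrix.IsHermitian.cfc_apply_self {m : Type*} [Fintype m] [DecidableEq m]
    {M : Matrix m m ℝ} (hM : M.IsHermitian) (f : ℝ → ℝ) (i : m) :
    cfc f M i i =
      ∑ k, (hM.eigenvectorUnitary : Matrix m m ℝ) i k ^ 2 * f (hM.eigenvalues k) := by
  rw [hM.cfc_eq, IsHermitian.cfc, Unitary.conjStarAlgAut_apply]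
  simp only [mul_apply, diagonal_apply, star_apply, star_trivial, mul_ite, mul_zero,
    sum_ite_eq', mem_univ, if_true, Function.comp_apply, RCLike.ofReal_real_eq_id, id]
  exact sum_congr rfl fun k _ => by ring

lemma Matrix.PosSemidef.apply_self_pow_three_le {m : Type*} [Fintype m] [DecidableEq m]
    {M : Matrix m m ℝ} (hM : M.PosSemidef) (i : m) :
    M i i ^ 3 ≤ cfc Real.sqrt M i i ^ 2 * (M * M) i i := by
  have hsq (k : m) : √(hM.1.eigenvalues k) ^ 2 = hM.1.eigenvalues k :=
    Real.sq_sqrt (hM.eigenvalues_nonneg k)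
  have hM_apply : M i i = ∑ k, (hM.1.eigenvectorUnitary : Matrix m m ℝ) i k ^ 2 *
      √(hM.1.eigenvalues k) ^ 2 := by
    conv_lhs => rw [← cfc_id' ℝ M hM.1.isSelfAdjoint]
    simp only [hM.1.cfc_apply_self, hsq]
  have hMM_apply : (M * M) i i = ∑ k, (hM.1.eigenvectorUnitary : Matrix m m ℝ) i k ^ 2 *
      √(hM.1.eigenvalues k) ^ 4 := by
    rw [← sq, ← cfc_pow_id (R := ℝ) M 2 hM.1.isSelfAdjoint, hM.1.cfc_apply_self]
    simp only [show (4 : ℕ) = 2 * 2 from rfl, pow_mul, hsq]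
  rw [hM_apply, hMM_apply, hM.1.cfc_apply_self]
  exact sum_mul_sq_pow_three_le univ (fun _ _ => sq_nonneg _) fun _ _ => Real.sqrt_nonneg _

namespace SimpleGraph

variable {V : Type*} [Fintype V] (G : SimpleGraph V) [DecidableRel G.Adj]

lemma adjMatrix_mul_self_apply (v w : V) :
    (G.adjMatrix ℝ * G.adjMatrix ℝ) v w = #{u ∈ G.neighborFinset v | G.Adj u w} := by
  rw [adjMatrix_mul_apply, card_filter, Nat.cast_sum]
  exact sum_congr rfl fun u _ => by by_cases h : G.Adj u w <;> simp [h]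

lemma adjMatrix_mul_self_apply_le_one
    (hquad : ∀ a b c e : V, G.Adj a b → G.Adj b c → G.Adj c e → G.Adj e a → a = c ∨ b = e)
    {v w : V} (hvw : v ≠ w) : (G.adjMatrix ℝ * G.adjMatrix ℝ) v w ≤ 1 := by
  rw [adjMatrix_mul_self_apply, Nat.cast_le_one, card_le_one]
  intro x hx y hy
  simp only [mem_filter, mem_neighborFinset] at hx hy
  exact (hquad v x w y hx.1 hx.2 hy.2.symm hy.1.symm).resolve_left hvw

lemma sum_adjMatrix_mul_self_apply_le (v : V) :
    ∑ w, (G.adjMatrix ℝ * G.adjMatrix ℝ) v w ≤ G.degree v * G.maxDegree := by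
  have hrow (u : V) : ∑ w, G.adjMatrix ℝ u w = G.degree u := by
    rw [← dotProduct_one, adjMatrix_dotProduct]
    simp
  calc ∑ w, (G.adjMatrix ℝ * G.adjMatrix ℝ) v w
      = ∑ u ∈ G.neighborFinset v, (G.degree u : ℝ) := by
        simp only [adjMatrix_mul_apply]
        rw [sum_comm]
        exact sum_congr rfl fun u _ => hrow u
    _ ≤ ∑ _u ∈ G.neighborFinset v, (G.maxDegree : ℝ) :=
        sum_le_sum fun u _ => by exact_mod_cast G.degree_le_maxDegree u
    _ = G.degree v * G.maxDegree := by simp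

lemma adjMatrix_sq_sq_apply_self_le [DecidableEq V]
    (hquad : ∀ a b c e : V, G.Adj a b → G.Adj b c → G.Adj c e → G.Adj e a → a = c ∨ b = e)
    (v : V) :
    (G.adjMatrix ℝ * G.adjMatrix ℝ * (G.adjMatrix ℝ * G.adjMatrix ℝ)) v v ≤
      (G.degree v : ℝ) ^ 2 + G.degree v * G.maxDegree - G.degree v := by
  have hBvv : (G.adjMatrix ℝ * G.adjMatrix ℝ) v v = G.degree v :=
    G.adjMatrix_mul_self_apply_self v
  have hB_nonneg (w : V) : 0 ≤ (G.adjMatrix ℝ * G.adjMatrix ℝ) v w := by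
    rw [adjMatrix_mul_self_apply]; positivity
  set B := G.adjMatrix ℝ * G.adjMatrix ℝ
  have hBsymm : Bᵀ = B := by simp [B, transpose_mul]
  calc (B * B) v v = ∑ w, B v w ^ 2 := by
        rw [mul_apply]
        exact sum_congr rfl fun w _ => by rw [sq, ← transpose_apply B v w, hBsymm]
    _ = B v v ^ 2 + ∑ w ∈ univ.erase v, B v w ^ 2 := (add_sum_erase _ _ (mem_univ v)).symm
    _ ≤ B v v ^ 2 + ∑ w ∈ univ.erase v, B v w := by
        gcongr with w hw
        exact pow_le_of_le_one (hB_nonneg w)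
          (G.adjMatrix_mul_self_apply_le_one hquad (ne_of_mem_erase hw).symm) two_ne_zero
    _ = B v v ^ 2 + (∑ w, B v w - B v v) := by rw [sum_erase_eq_sub (mem_univ v)]
    _ ≤ _ := by
        rw [hBvv]
        linarith [G.sum_adjMatrix_mul_self_apply_le v]

end SimpleGraph

section VertexEnergy

variable {n : ℕ} (G : SimpleGraph (Fin n)) [DecidableRel G.Adj] (v : Fin n)

lemma vertexEnergy_eq_cfc_sqrt :
    vertexEnergy G v = cfc Real.sqrt (G.adjMatrix ℝ * (G.adjMatrix ℝ)ᴴ) v v := by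
  rw [IsHermitian.cfc_eq, IsHermitian.cfc, Unitary.conjStarAlgAut_apply]
  rfl

lemma vertexEnergy_nonneg : 0 ≤ vertexEnergy G v := by
  rw [vertexEnergy_eq_cfc_sqrt, (isHermitian_mul_conjTranspose_self _).cfc_apply_self]
  exact sum_nonneg fun _ _ => mul_nonneg (sq_nonneg _) (Real.sqrt_nonneg _)

lemma degree_pow_three_le_vertexEnergy_sq_mul :
    (G.degree v : ℝ) ^ 3 ≤ vertexEnergy G v ^ 2 *
      (G.adjMatrix ℝ * G.adjMatrix ℝ * (G.adjMatrix ℝ * G.adjMatrix ℝ)) v v := by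
  have hA : (G.adjMatrix ℝ)ᴴ = G.adjMatrix ℝ := by
    rw [conjTranspose_eq_transpose_of_trivial, SimpleGraph.transpose_adjMatrix]
  have hP := posSemidef_self_mul_conjTranspose (G.adjMatrix ℝ)
  rw [hA] at hP
  rw [vertexEnergy_eq_cfc_sqrt, hA, ← G.adjMatrix_mul_self_apply_self]
  exact hP.apply_self_pow_three_le v

end VertexEnergy

lemma two_le_of_pow_three_le {a b d Δ : ℝ} (ha : 0 ≤ a) (hΔ : 0 ≤ Δ) (hb : 2 * √Δ + 2 ≤ b)
    (hcube : b ^ 3 ≤ a ^ 2 * d) (hd : d ≤ b ^ 2 + b * Δ - b) : 2 ≤ a := by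
  have hsqrt : √Δ ^ 2 = Δ := Real.sq_sqrt hΔ
  have hb_pos : 0 < b := by linarith [Real.sqrt_nonneg Δ]
  have hgap : 4 * Δ ≤ (b - 2) ^ 2 := by nlinarith [Real.sqrt_nonneg Δ]
  -- `b³ - 4 (b² + bΔ - b) = b ((b - 2)² - 4Δ)`
  have h4d : 4 * d ≤ a ^ 2 * d := by nlinarith
  have hd_pos : 0 < d := by
    by_contra! h
    nlinarith [mul_nonpos_of_nonneg_of_nonpos (sq_nonneg a) h, pow_pos hb_pos 3]
  nlinarith [le_of_mul_le_mul_right h4d hd_pos]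

theorem stmt_12 {n : ℕ} (G : SimpleGraph (Fin n)) [DecidableRel G.Adj]
    (hquad : ∀ a b c e : Fin n,
      G.Adj a b → G.Adj b c → G.Adj c e → G.Adj e a → a = c ∨ b = e)
    (hdeg : 2 * Real.sqrt (G.maxDegree) + 2 ≤ (G.minDegree : ℝ)) :
    ∀ v : Fin n, 2 ≤ vertexEnergy G v := by
  intro v
  have hdeg_v : 2 * √(G.maxDegree : ℝ) + 2 ≤ G.degree v :=
    hdeg.trans (by exact_mod_cast G.minDegree_le_degree v)
  exact two_le_of_pow_three_le (vertexEnergy_nonneg G v) (Nat.cast_nonneg _) hdeg_v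
    (degree_pow_three_le_vertexEnergy_sq_mul G v) (G.adjMatrix_sq_sq_apply_self_le hquad v)
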